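/- The closed unit ball D^{n+1} ⊆ R^{n+1} is a self-dual Wulff shape: its induced spherical convex body W̃ = {(x,1)/√(‖x‖²+1) : ‖x‖ ≤ 1} satisfies W̃ = W̃°. -/

import Mathlib

open scoped RealInnerProductSpace BigOperators
open Real

namespace Sph

/-- Ambient Euclidean space `ℝ^{n+2}` containing the sphere `S^{n+1}`. -/
abbrev E (n : ℕ) := EuclideanSpace ℝ (Fin (n + 2))

/-- The unit sphere `S^{n+1} ⊂ ℝ^{n+2}`. -/
def sph (n : ℕ) : Set (E n) := {x | ‖x‖ = 1}

/-- The closed hemisphere `H(P)` centered at `P`. -/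
def hemi {n : ℕ} (P : E n) : Set (E n) := {Q | ‖Q‖ = 1 ∧ 0 ≤ ⟪P, Q⟫}

/-- The boundary `∂H(P)` of the hemisphere centered at `P`. -/
def hemiBdry {n : ℕ} (P : E n) : Set (E n) := {Q | ‖Q‖ = 1 ∧ ⟪P, Q⟫ = 0}

/-- Geodesic (angular) distance on the unit sphere. -/
noncomputable def gdist {n : ℕ} (P Q : E n) : ℝ := Real.arccos ⟪P, Q⟫

/-- Radial normalization of a vector. -/
noncomputable def nmz {n : ℕ} (x : E n) : E n := ‖x‖⁻¹ • x

/-- The geodesic arc joining `P` and `Q`. -/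
noncomputable def arc {n : ℕ} (P Q : E n) : Set (E n) :=
  {X | ∃ t ∈ Set.Icc (0 : ℝ) 1, X = nmz ((1 - t) • P + t • Q)}

/-- A subset of the sphere is hemispherical if it misses some closed hemisphere. -/
def Hemispherical {n : ℕ} (W : Set (E n)) : Prop := ∃ P ∈ sph n, W ∩ hemi P = ∅

/-- Spherical convexity: a subset of the sphere closed under geodesic arcs. -/
noncomputable def SphConvex {n : ℕ} (W : Set (E n)) : Prop :=
  W ⊆ sph n ∧ ∀ P ∈ W, ∀ Q ∈ W, arc P Q ⊆ W

/-- Interior of `W` relative to the sphere. -/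
def sphInterior {n : ℕ} (W : Set (E n)) : Set (E n) :=
  {X | X ∈ W ∧ ∃ U : Set (E n), IsOpen U ∧ X ∈ U ∧ U ∩ sph n ⊆ W}

/-- Frontier of `W` relative to the sphere. -/
def sphFrontier {n : ℕ} (W : Set (E n)) : Set (E n) :=
  closure W ∩ closure (sph n \ W)

/-- A spherical convex body: closed, hemispherical, spherically convex,
with an interior point. -/
noncomputable def SphConvexBody {n : ℕ} (W : Set (E n)) : Prop :=
  IsClosed W ∧ Hemispherical W ∧ SphConvex W ∧ (sphInterior W).Nonempty

/-- The hemisphere `H(P)` supports `W`. -/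
noncomputable def Supports {n : ℕ} (W : Set (E n)) (P : E n) : Prop :=
  P ∈ sph n ∧ W ⊆ hemi P ∧ (sphFrontier W ∩ hemiBdry P).Nonempty

/-- The width of `W` determined by the supporting hemisphere `H(P)`:
the minimum thickness `π - |PQ|` of lunes `H(P) ∩ H(Q)` over supporting
hemispheres `H(Q)` (so that `W ⊆ H(P) ∩ H(Q)`). -/
noncomputable def widthAt {n : ℕ} (W : Set (E n)) (P : E n) : ℝ :=
  sInf {d | ∃ Q, Supports W Q ∧ d = π - gdist P Q}

/-- `W` is of constant width `ρ`. -/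
noncomputable def ConstWidth {n : ℕ} (W : Set (E n)) (ρ : ℝ) : Prop :=
  ∀ P, Supports W P → widthAt W P = ρ

/-- The spherical polar set `W° = ⋂_{P ∈ W} H(P)` (as a subset of the sphere). -/
def polar {n : ℕ} (W : Set (E n)) : Set (E n) :=
  {Q | ‖Q‖ = 1 ∧ ∀ P ∈ W, 0 ≤ ⟪P, Q⟫}

/-- The diameter of `W`: the supremum of geodesic distances between its points. -/
noncomputable def diam {n : ℕ} (W : Set (E n)) : ℝ :=
  sSup {d | ∃ P ∈ W, ∃ Q ∈ W, d = gdist P Q}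

/-- The spherical convex hull: normalized nonnegative convex combinations. -/
noncomputable def sconv {n : ℕ} (W : Set (E n)) : Set (E n) :=
  {X | ∃ (k : ℕ) (t : Fin k → ℝ) (f : Fin k → E n), (∀ i, f i ∈ W) ∧
    (∀ i, 0 ≤ t i) ∧ (∑ i, t i) = 1 ∧ X = nmz (∑ i, t i • f i)}

/-- Embedding `x ↦ (x, 1)` of `ℝ^{n+1}` into `ℝ^{n+2}`. -/
noncomputable def lift {n : ℕ} (x : EuclideanSpace ℝ (Fin (n + 1))) : E n :=
  (WithLp.equiv 2 (Fin (n + 2) → ℝ)).symm (Fin.snoc (fun i => x i) 1)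

/-- The north pole `N = (0, …, 0, 1)`. -/
noncomputable def north (n : ℕ) : E n := EuclideanSpace.single (Fin.last (n + 1)) 1

end Sph

open Sph

/-!
`W̃` is the trace on the sphere of the second-order cone `‖Q'‖ ≤ Qₙ₊₂`, where `Q'` denotes the
first `n + 1` coordinates of `Q`, and this cone is self-dual: `Q` lies in `W̃°` iff
`⟪x, Q'⟫ + Qₙ₊₂ ≥ 0` for all `‖x‖ ≤ 1`, which by Cauchy–Schwarz (tested at `x = -Q'/‖Q'‖`)
says exactly `‖Q'‖ ≤ Qₙ₊₂`.
-/

theorem norm_le_iff_forall_norm_le_one_inner_add_nonneg {F : Type*}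
    [NormedAddCommGroup F] [InnerProductSpace ℝ F] (q : F) (a : ℝ) :
    ‖q‖ ≤ a ↔ ∀ x : F, ‖x‖ ≤ 1 → 0 ≤ ⟪x, q⟫ + a := by
  constructor
  · intro hq x hx
    have hcs : -(‖x‖ * ‖q‖) ≤ ⟪x, q⟫ := neg_le_of_abs_le (abs_real_inner_le_norm x q)
    nlinarith [norm_nonneg q]
  · intro h
    have hx : ‖-(‖q‖⁻¹ • q)‖ ≤ 1 := by
      rw [norm_neg, norm_smul, norm_inv, norm_norm]
      exact inv_mul_le_one
    have := h _ hx
    rw [inner_neg_left, real_inner_smul_left, real_inner_self_eq_norm_sq, pow_two, ← mul_assoc,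
      inv_mul_mul_self] at this
    linarith

namespace Sph

variable {n : ℕ}

lemma norm_nmz {u : E n} (hu : u ≠ 0) : ‖nmz u‖ = 1 := by
  rw [nmz, norm_smul, norm_inv, norm_norm, inv_mul_cancel₀ (norm_ne_zero_iff.mpr hu)]

lemma nmz_of_norm_eq_one {u : E n} (hu : ‖u‖ = 1) : nmz u = u := by
  rw [nmz, hu, inv_one, one_smul]

lemma nmz_smul_of_pos {c : ℝ} (hc : 0 < c) (u : E n) : nmz (c • u) = nmz u := by
  rw [nmz, nmz, norm_smul, Real.norm_of_nonneg hc.le, mul_inv_rev, smul_smul, mul_assoc,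
    inv_mul_cancel₀ hc.ne', mul_one]

lemma inner_nmz_left_nonneg_iff (u v : E n) : 0 ≤ ⟪nmz u, v⟫ ↔ 0 ≤ ⟪u, v⟫ := by
  rw [nmz, real_inner_smul_left]
  rcases eq_or_ne u 0 with rfl | hu
  · simp
  · exact mul_nonneg_iff_of_pos_left (inv_pos.mpr (norm_pos_iff.mpr hu))

noncomputable def init (Q : E n) : EuclideanSpace ℝ (Fin (n + 1)) :=
  WithLp.toLp 2 (Fin.init Q)

@[simp]
lemma init_apply (Q : E n) (i : Fin (n + 1)) : init Q i = Q i.castSucc := rfl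

@[simp]
lemma init_smul (c : ℝ) (Q : E n) : init (c • Q) = c • init Q := rfl

@[simp]
lemma init_lift (x : EuclideanSpace ℝ (Fin (n + 1))) : init (lift x) = x := by
  ext i; simp [lift]

@[simp]
lemma lift_last (x : EuclideanSpace ℝ (Fin (n + 1))) : lift x (Fin.last (n + 1)) = 1 := by
  simp [lift]

lemma lift_ne_zero (x : EuclideanSpace ℝ (Fin (n + 1))) : lift x ≠ 0 := fun h => by
  simpa [h] using lift_last x

lemma inner_eq_inner_init_add (Q R : E n) :
    ⟪Q, R⟫ = ⟪init Q, init R⟫ + Q (Fin.last (n + 1)) * R (Fin.last (n + 1)) := by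
  simp only [PiLp.inner_apply, RCLike.inner_apply, conj_trivial, init_apply,
    Fin.sum_univ_castSucc]
  ring

lemma norm_sq_eq_norm_init_sq_add (Q : E n) :
    ‖Q‖ ^ 2 = ‖init Q‖ ^ 2 + Q (Fin.last (n + 1)) ^ 2 := by
  rw [← real_inner_self_eq_norm_sq, ← real_inner_self_eq_norm_sq, inner_eq_inner_init_add, sq]

lemma inner_lift_left (x : EuclideanSpace ℝ (Fin (n + 1))) (Q : E n) :
    ⟪lift x, Q⟫ = ⟪x, init Q⟫ + Q (Fin.last (n + 1)) := by
  rw [inner_eq_inner_init_add, init_lift, lift_last, one_mul]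

lemma lift_inv_smul_init {Q : E n} (hQ : Q (Fin.last (n + 1)) ≠ 0) :
    lift ((Q (Fin.last (n + 1)))⁻¹ • init Q) = (Q (Fin.last (n + 1)))⁻¹ • Q := by
  ext i
  rcases Fin.eq_castSucc_or_eq_last i with ⟨j, rfl⟩ | rfl
  · simp [lift]
  · simp [hQ]

/-- The spherical body `W̃` of the unit ball `D^{n+1}`. -/
def liftedBall (n : ℕ) : Set (E n) :=
  {X | ∃ x : EuclideanSpace ℝ (Fin (n + 1)), ‖x‖ ≤ 1 ∧ X = nmz (lift x)}

lemma mem_liftedBall_iff (Q : E n) :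
    Q ∈ liftedBall n ↔ ‖Q‖ = 1 ∧ ‖init Q‖ ≤ Q (Fin.last (n + 1)) := by
  constructor
  · rintro ⟨x, hx, rfl⟩
    refine ⟨norm_nmz (lift_ne_zero x), ?_⟩
    simp only [nmz, init_smul, init_lift, norm_smul, norm_inv, norm_norm, PiLp.smul_apply,
      lift_last, smul_eq_mul, mul_one]
    exact mul_le_of_le_one_right (inv_nonneg.mpr (norm_nonneg _)) hx
  · rintro ⟨hQ, hle⟩
    set a := Q (Fin.last (n + 1))
    have ha : 0 < a := by nlinarith [norm_sq_eq_norm_init_sq_add Q, norm_nonneg (init Q)]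
    refine ⟨a⁻¹ • init Q, ?_, ?_⟩
    · rw [norm_smul, norm_inv, Real.norm_of_nonneg ha.le]
      exact inv_mul_le_one_of_le₀ hle ha.le
    · rw [lift_inv_smul_init ha.ne', nmz_smul_of_pos (inv_pos.mpr ha), nmz_of_norm_eq_one hQ]

lemma mem_polar_liftedBall_iff (Q : E n) :
    Q ∈ polar (liftedBall n) ↔
      ‖Q‖ = 1 ∧ ∀ x : EuclideanSpace ℝ (Fin (n + 1)), ‖x‖ ≤ 1 →
        0 ≤ ⟪x, init Q⟫ + Q (Fin.last (n + 1)) := by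
  refine and_congr_right' ⟨fun h x hx => ?_, fun h P ⟨x, hx, hP⟩ => ?_⟩
  · rw [← inner_lift_left, ← inner_nmz_left_nonneg_iff]
    exact h _ ⟨x, hx, rfl⟩
  · rw [hP, inner_nmz_left_nonneg_iff, inner_lift_left]
    exact h x hx

end Sph

theorem unit_ball_self_dual {n : ℕ} :
    {X : E n | ∃ x : EuclideanSpace ℝ (Fin (n + 1)), ‖x‖ ≤ 1 ∧ X = nmz (lift x)} =
      polar {X : E n | ∃ x : EuclideanSpace ℝ (Fin (n + 1)), ‖x‖ ≤ 1 ∧ X = nmz (lift x)} := by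
  ext Q
  rw [← liftedBall, mem_liftedBall_iff, mem_polar_liftedBall_iff,
    norm_le_iff_forall_norm_le_one_inner_add_nonneg]
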